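/- Let (S,+) be a Clifford semigroup with an exact factorization S = U + V into two Clifford subsemigroups (every a ∈ S is uniquely a = u_a + v_a with u_a ∈ U, v_a ∈ V). Define a∘b := u_a + b + v_a. Then (S,+,∘) is a weak brace, and the inverse of a with respect to ∘ is -u_a - v_a. -/

import Mathlib

/-!
Since `a = u a + v a` with `u a ∈ U`, `v a ∈ V`, the product `a ∘ b = u a + b + v a` factors as
`(u a + u b) + (v b + v a)`, so by exactness `u (a ∘ b) = u a + u b` and `v (a ∘ b) = v b + v a`:
`u` is a homomorphism and `v` an anti-homomorphism for `∘`. Every brace axiom then reduces, after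
applying `u` and `v`, to identities in the inverse semigroups `U` and `V`, the remaining bookkeeping
being done by moving the central idempotents `-x + x` around.
-/

/-- A weak (left) brace: `(S,+)` and `(S,∘)` are inverse semigroups (with designated
inverse maps `neg` and `inv`), satisfying `a∘(b+c) = a∘b - a + a∘c` and `a∘a⁻ = -a + a`. -/
structure WeakBrace (S : Type*) where
  add : S → S → S
  mul : S → S → S
  neg : S → S
  inv : S → S
  add_assoc : ∀ a b c : S, add (add a b) c = add a (add b c)
  mul_assoc : ∀ a b c : S, mul (mul a b) c = mul a (mul b c)
  add_neg_add : ∀ a : S, add (add a (neg a)) a = a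
  neg_add_neg : ∀ a : S, add (add (neg a) a) (neg a) = neg a
  neg_unique : ∀ a x : S, add (add a x) a = a → add (add x a) x = x → x = neg a
  mul_inv_mul : ∀ a : S, mul (mul a (inv a)) a = a
  inv_mul_inv : ∀ a : S, mul (mul (inv a) a) (inv a) = inv a
  inv_unique : ∀ a x : S, mul (mul a x) a = a → mul (mul x a) x = x → x = inv a
  distrib : ∀ a b c : S, mul a (add b c) = add (add (mul a b) (neg a)) (mul a c)
  mul_inv_eq : ∀ a : S, mul a (inv a) = add (neg a) a

section

variable {S : Type*}

structure IsInverseSemigroup (add : S → S → S) (neg : S → S) : Prop where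
  add_assoc : ∀ a b c : S, add (add a b) c = add a (add b c)
  add_neg_add : ∀ a : S, add (add a (neg a)) a = a
  neg_add_neg : ∀ a : S, add (add (neg a) a) (neg a) = neg a
  neg_unique : ∀ a x : S, add (add a x) a = a → add (add x a) x = x → x = neg a

structure IsCliffordSemigroup (add : S → S → S) (neg : S → S) : Prop
    extends IsInverseSemigroup add neg where
  idem_central : ∀ e a : S, add e e = e → add e a = add a e

structure IsExactFactorization (add : S → S → S) (neg : S → S) (U V : Set S) (u v : S → S) :
    Prop where
  add_mem_left : ∀ a b, a ∈ U → b ∈ U → add a b ∈ U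
  neg_mem_left : ∀ a, a ∈ U → neg a ∈ U
  add_mem_right : ∀ a b, a ∈ V → b ∈ V → add a b ∈ V
  neg_mem_right : ∀ a, a ∈ V → neg a ∈ V
  left_mem : ∀ a, u a ∈ U
  right_mem : ∀ a, v a ∈ V
  eq_add : ∀ a : S, a = add (u a) (v a)
  unique : ∀ a x y : S, x ∈ U → y ∈ V → a = add x y → x = u a ∧ y = v a

variable {add : S → S → S} {neg : S → S}

local infixl:65 " ⊹ " => add
local prefix:75 "⊖" => neg

namespace IsInverseSemigroup

theorem add_neg_add_left (hS : IsInverseSemigroup add neg) (a b : S) :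
    a ⊹ (⊖a ⊹ (a ⊹ b)) = a ⊹ b := by
  rw [← hS.add_assoc, ← hS.add_assoc, hS.add_neg_add]

theorem neg_add_neg_left (hS : IsInverseSemigroup add neg) (a b : S) :
    ⊖a ⊹ (a ⊹ (⊖a ⊹ b)) = ⊖a ⊹ b := by
  rw [← hS.add_assoc, ← hS.add_assoc, hS.neg_add_neg]

theorem add_neg_add' (hS : IsInverseSemigroup add neg) (a : S) : a ⊹ (⊖a ⊹ a) = a := by
  rw [← hS.add_assoc, hS.add_neg_add]

theorem neg_add_neg' (hS : IsInverseSemigroup add neg) (a : S) : ⊖a ⊹ (a ⊹ ⊖a) = ⊖a := by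
  rw [← hS.add_assoc, hS.neg_add_neg]

theorem add_neg_idem (hS : IsInverseSemigroup add neg) (a : S) : a ⊹ ⊖a ⊹ (a ⊹ ⊖a) = a ⊹ ⊖a := by
  rw [← hS.add_assoc, hS.add_neg_add]

theorem neg_add_idem (hS : IsInverseSemigroup add neg) (a : S) : ⊖a ⊹ a ⊹ (⊖a ⊹ a) = ⊖a ⊹ a := by
  rw [← hS.add_assoc, hS.neg_add_neg]

end IsInverseSemigroup

namespace IsCliffordSemigroup

theorem add_left_comm_of_idem (hS : IsCliffordSemigroup add neg) {e : S} (he : e ⊹ e = e)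
    (a b : S) : a ⊹ (e ⊹ b) = e ⊹ (a ⊹ b) := by
  rw [← hS.add_assoc, ← hS.idem_central e a he, hS.add_assoc]

theorem add_neg_comm (hS : IsCliffordSemigroup add neg) (a : S) : a ⊹ ⊖a = ⊖a ⊹ a := by
  have he := hS.idem_central _ (⊖a) (hS.add_neg_idem a)
  have hf := hS.idem_central _ (a ⊹ ⊖a) (hS.neg_add_idem a)
  calc a ⊹ ⊖a = ⊖a ⊹ a ⊹ (a ⊹ ⊖a) := by
        rw [← hS.add_assoc, hS.idem_central _ a (hS.neg_add_idem a), hS.add_neg_add']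
    _ = a ⊹ ⊖a ⊹ (⊖a ⊹ a) := hf
    _ = ⊖a ⊹ a := by rw [← hS.add_assoc, he, hS.neg_add_neg']

theorem neg_add (hS : IsCliffordSemigroup add neg) (a b : S) : ⊖(a ⊹ b) = ⊖b ⊹ ⊖a := by
  have hb := hS.add_left_comm_of_idem (hS.add_neg_idem b)
  have ha := hS.add_left_comm_of_idem (hS.neg_add_idem a)
  refine (hS.neg_unique _ _ ?_ ?_).symm
  · simp only [hS.add_assoc]
    rw [← hS.add_assoc (⊖a) a b, ha (⊖b) b, ha b, hS.add_assoc (⊖a) a, hS.add_neg_add_left,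
      hS.add_neg_add']
  · simp only [hS.add_assoc]
    rw [← hS.add_assoc b (⊖b) (⊖a), hb a, hb (⊖a), hS.add_assoc b, hS.neg_add_neg_left,
      hS.neg_add_neg']

end IsCliffordSemigroup

def circ (add : S → S → S) (u v : S → S) (a b : S) : S := add (add (u a) b) (v a)

def circInv (add : S → S → S) (neg : S → S) (u v : S → S) (a : S) : S :=
  add (neg (u a)) (neg (v a))

namespace IsExactFactorization

variable {U V : Set S} {u v : S → S}

local infixl:70 " ⊚ " => circ add u v
local postfix:max "ᵒ" => circInv add neg u v

theorem proj_add (hF : IsExactFactorization add neg U V u v) {x y : S} (hx : x ∈ U) (hy : y ∈ V) :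
    u (x ⊹ y) = x ∧ v (x ⊹ y) = y :=
  let ⟨hu, hv⟩ := hF.unique _ x y hx hy rfl
  ⟨hu.symm, hv.symm⟩

theorem circ_eq_add (hS : IsInverseSemigroup add neg) (hF : IsExactFactorization add neg U V u v)
    (a b : S) : a ⊚ b = (u a ⊹ u b) ⊹ (v b ⊹ v a) := by
  unfold circ
  conv_lhs => rw [hF.eq_add b]
  simp only [hS.add_assoc]

theorem u_circ (hS : IsInverseSemigroup add neg) (hF : IsExactFactorization add neg U V u v)
    (a b : S) : u (a ⊚ b) = u a ⊹ u b := by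
  rw [hF.circ_eq_add hS]
  exact (hF.proj_add (hF.add_mem_left _ _ (hF.left_mem a) (hF.left_mem b))
    (hF.add_mem_right _ _ (hF.right_mem b) (hF.right_mem a))).1

theorem v_circ (hS : IsInverseSemigroup add neg) (hF : IsExactFactorization add neg U V u v)
    (a b : S) : v (a ⊚ b) = v b ⊹ v a := by
  rw [hF.circ_eq_add hS]
  exact (hF.proj_add (hF.add_mem_left _ _ (hF.left_mem a) (hF.left_mem b))
    (hF.add_mem_right _ _ (hF.right_mem b) (hF.right_mem a))).2

theorem u_circInv (hF : IsExactFactorization add neg U V u v) (a : S) : u aᵒ = ⊖u a :=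
  (hF.proj_add (hF.neg_mem_left _ (hF.left_mem a)) (hF.neg_mem_right _ (hF.right_mem a))).1

theorem v_circInv (hF : IsExactFactorization add neg U V u v) (a : S) : v aᵒ = ⊖v a :=
  (hF.proj_add (hF.neg_mem_left _ (hF.left_mem a)) (hF.neg_mem_right _ (hF.right_mem a))).2

theorem circ_assoc (hS : IsInverseSemigroup add neg) (hF : IsExactFactorization add neg U V u v)
    (a b c : S) : a ⊚ b ⊚ c = a ⊚ (b ⊚ c) := by
  show u (a ⊚ b) ⊹ c ⊹ v (a ⊚ b) = u a ⊹ (b ⊚ c) ⊹ v a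
  rw [hF.u_circ hS, hF.v_circ hS, circ]
  simp only [hS.add_assoc]

theorem circ_circInv_circ (hS : IsInverseSemigroup add neg)
    (hF : IsExactFactorization add neg U V u v) (a : S) : a ⊚ aᵒ ⊚ a = a := by
  show u (a ⊚ aᵒ) ⊹ a ⊹ v (a ⊚ aᵒ) = a
  rw [hF.u_circ hS, hF.v_circ hS, hF.u_circInv, hF.v_circInv]
  calc u a ⊹ ⊖u a ⊹ a ⊹ (⊖v a ⊹ v a) = u a ⊹ ⊖u a ⊹ (u a ⊹ v a) ⊹ (⊖v a ⊹ v a) := by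
        rw [← hF.eq_add]
    _ = u a ⊹ v a := by
        simp only [hS.add_assoc]
        rw [hS.add_neg_add_left, hS.add_neg_add']
    _ = a := (hF.eq_add a).symm

theorem circInv_circ_circInv (hS : IsInverseSemigroup add neg)
    (hF : IsExactFactorization add neg U V u v) (a : S) : aᵒ ⊚ a ⊚ aᵒ = aᵒ := by
  show u (aᵒ ⊚ a) ⊹ aᵒ ⊹ v (aᵒ ⊚ a) = aᵒ
  rw [hF.u_circ hS, hF.v_circ hS, hF.u_circInv, hF.v_circInv, circInv]
  simp only [hS.add_assoc]
  rw [hS.neg_add_neg_left, hS.neg_add_neg']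

theorem eq_circInv_of_circ_circ (hS : IsInverseSemigroup add neg)
    (hF : IsExactFactorization add neg U V u v) {a x : S} (h₁ : a ⊚ x ⊚ a = a)
    (h₂ : x ⊚ a ⊚ x = x) : x = aᵒ := by
  have hu {p q : S} (h : p ⊚ q ⊚ p = p) : u p ⊹ u q ⊹ u p = u p := by
    rw [← hF.u_circ hS, ← hF.u_circ hS, h]
  have hv {p q : S} (h : p ⊚ q ⊚ p = p) : v p ⊹ v q ⊹ v p = v p := by
    rw [hS.add_assoc, ← hF.v_circ hS, ← hF.v_circ hS, h]
  calc x = u x ⊹ v x := hF.eq_add x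
    _ = aᵒ := by
        rw [circInv, ← hS.neg_unique _ _ (hu h₁) (hu h₂), ← hS.neg_unique _ _ (hv h₁) (hv h₂)]

theorem neg_eq_add (hS : IsCliffordSemigroup add neg) (hF : IsExactFactorization add neg U V u v)
    (a : S) : ⊖a = ⊖v a ⊹ ⊖u a := by
  conv_lhs => rw [hF.eq_add a]
  exact hS.neg_add _ _

theorem circ_add (hS : IsCliffordSemigroup add neg) (hF : IsExactFactorization add neg U V u v)
    (a b c : S) : a ⊚ (b ⊹ c) = a ⊚ b ⊹ ⊖a ⊹ a ⊚ c := by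
  have hf := hS.add_left_comm_of_idem (hS.neg_add_idem (u a))
  have he := hS.add_left_comm_of_idem (hS.add_neg_idem (v a))
  unfold circ
  rw [hF.neg_eq_add hS]
  simp only [hS.add_assoc]
  rw [← hS.add_assoc (⊖u a) (u a), hf (⊖v a), hf (v a), hf b, hS.add_assoc (⊖u a) (u a),
    hS.add_neg_add_left, ← hS.add_assoc (v a) (⊖v a), ← he c, hS.add_neg_add]

theorem circ_circInv (hS : IsCliffordSemigroup add neg) (hF : IsExactFactorization add neg U V u v)
    (a : S) : a ⊚ aᵒ = ⊖a ⊹ a :=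
  calc a ⊚ aᵒ = u a ⊹ (⊖u a ⊹ ⊖v a) ⊹ v a := rfl
    _ = ⊖v a ⊹ ⊖u a ⊹ (u a ⊹ v a) := by
        simp only [hS.add_assoc]
        rw [← hS.add_assoc (u a), hS.add_neg_comm, ← hS.add_assoc (⊖u a) (u a) (v a),
          hS.add_left_comm_of_idem (hS.neg_add_idem (u a))]
    _ = ⊖a ⊹ a := by rw [← hF.neg_eq_add hS, ← hF.eq_add]

def weakBrace (hS : IsCliffordSemigroup add neg) (hF : IsExactFactorization add neg U V u v) :
    WeakBrace S where
  add := add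
  mul := circ add u v
  neg := neg
  inv := circInv add neg u v
  add_assoc := hS.add_assoc
  mul_assoc := hF.circ_assoc hS.toIsInverseSemigroup
  add_neg_add := hS.add_neg_add
  neg_add_neg := hS.neg_add_neg
  neg_unique := hS.neg_unique
  mul_inv_mul := hF.circ_circInv_circ hS.toIsInverseSemigroup
  inv_mul_inv := hF.circInv_circ_circInv hS.toIsInverseSemigroup
  inv_unique _ _ := hF.eq_circInv_of_circ_circ hS.toIsInverseSemigroup
  distrib := hF.circ_add hS
  mul_inv_eq := hF.circ_circInv hS

end IsExactFactorization

end

theorem clifford_exact_factorization_weakBrace {S : Type*}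
    (add : S → S → S) (neg : S → S)
    (add_assoc : ∀ a b c : S, add (add a b) c = add a (add b c))
    (add_neg_add : ∀ a : S, add (add a (neg a)) a = a)
    (neg_add_neg : ∀ a : S, add (add (neg a) a) (neg a) = neg a)
    (neg_unique : ∀ a x : S, add (add a x) a = a → add (add x a) x = x → x = neg a)
    (idem_central : ∀ e a : S, add e e = e → add e a = add a e)
    (U V : Set S)
    (hUadd : ∀ a b, a ∈ U → b ∈ U → add a b ∈ U) (hUneg : ∀ a, a ∈ U → neg a ∈ U)
    (hVadd : ∀ a b, a ∈ V → b ∈ V → add a b ∈ V) (hVneg : ∀ a, a ∈ V → neg a ∈ V)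
    (u v : S → S) (hu : ∀ a, u a ∈ U) (hv : ∀ a, v a ∈ V)
    (hfact : ∀ a : S, a = add (u a) (v a))
    (hexact : ∀ a x y : S, x ∈ U → y ∈ V → a = add x y → x = u a ∧ y = v a) :
    ∃ W : WeakBrace S, W.add = add ∧ W.neg = neg ∧
      (∀ a b : S, W.mul a b = add (add (u a) b) (v a)) ∧
      (∀ a : S, W.inv a = add (neg (u a)) (neg (v a))) := by
  have hS : IsCliffordSemigroup add neg :=
    ⟨⟨add_assoc, add_neg_add, neg_add_neg, neg_unique⟩, idem_central⟩
  have hF : IsExactFactorization add neg U V u v :=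
    ⟨hUadd, hUneg, hVadd, hVneg, hu, hv, hfact, hexact⟩
  exact ⟨hF.weakBrace hS, rfl, rfl, fun _ _ => rfl, fun _ => rfl⟩
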